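/- arXiv:2110.13497 — 2 statements merged into one kernel-verified Lean document; each statement's English description precedes it below -/
import Mathlib

section
/- In the ERW whose memory after time m is {1,...,m}, the conditional second moment satisfies E(S_n^2 | F_m) = (S_m^2/m^2) ( m^2 + 2m(2p-1)(n-m) + (2p-1)^2 (n-m)(n-m-1) ) + (n-m), for n > m. -/
open MeasureTheory ProbabilityTheory Filter
open scoped ENNReal NNReal Topology

noncomputable section

variable {Ω : Type*} [MeasurableSpace Ω]

/-- The sigma-algebra generated by the steps `X i` with indices `i` in `s`. -/
def memSigma (X : ℕ → Ω → ℝ) (s : Finset ℕ) : MeasurableSpace Ω :=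
  ⨆ i ∈ s, MeasurableSpace.comap (X i) inferInstance

/-- The position `S_n = X_1 + ⋯ + X_n` of the walk after `n` steps. -/
def pos (X : ℕ → Ω → ℝ) (n : ℕ) (ω : Ω) : ℝ := ∑ k ∈ Finset.Icc 1 n, X k ω

/-- Step `j` of an ERW with memory `mem`: there are a uniformly distributed index `K` on
`mem` and a sign `ε` equal to `1` with probability `p` and `-1` with probability `1-p`,
independent of each other and of the past, such that `X j = ε * X K`. -/
def erwStep (μ : Measure Ω) (p : ℝ) (X : ℕ → Ω → ℝ) (mem : Finset ℕ) (j : ℕ) : Prop :=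
  ∃ K : Ω → ℕ, ∃ ε : Ω → ℝ, Measurable K ∧ Measurable ε ∧
    (∀ ω, K ω ∈ mem) ∧
    (∀ k ∈ mem, μ {ω | K ω = k} = (mem.card : ℝ≥0∞)⁻¹) ∧
    μ {ω | ε ω = 1} = ENNReal.ofReal p ∧
    μ {ω | ε ω = -1} = ENNReal.ofReal (1 - p) ∧
    IndepFun K ε μ ∧
    Indep (MeasurableSpace.comap (fun ω => (K ω, ε ω)) inferInstance)
      (memSigma X (Finset.Icc 1 (j - 1))) μ ∧
    (∀ ω, X j ω = ε ω * X (K ω) ω)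

/-- The first step of the ERW is `+1` with probability `p` and `-1` with probability `1-p`. -/
def erwInit (μ : Measure Ω) (p : ℝ) (X : ℕ → Ω → ℝ) : Prop :=
  μ {ω | X 1 ω = 1} = ENNReal.ofReal p ∧ μ {ω | X 1 ω = -1} = ENNReal.ofReal (1 - p)

lemma memSigma_le (X : ℕ → Ω → ℝ) (hX : ∀ i, Measurable (X i)) (s : Finset ℕ) :
    memSigma X s ≤ ‹MeasurableSpace Ω› :=
  iSup₂_le fun i _ => (hX i).comap_le

lemma memSigma_mono (X : ℕ → Ω → ℝ) {s t : Finset ℕ} (h : s ⊆ t) :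
    memSigma X s ≤ memSigma X t :=
  iSup₂_le fun i hi =>
    le_iSup₂ (f := fun i (_ : i ∈ t) => MeasurableSpace.comap (X i) inferInstance) i (h hi)

lemma measurable_X_memSigma (X : ℕ → Ω → ℝ) {s : Finset ℕ} {k : ℕ} (hk : k ∈ s) :
    Measurable[memSigma X s] (X k) :=
  (Measurable.of_comap_le le_rfl).mono
    (le_iSup₂ (f := fun i (_ : i ∈ s) => MeasurableSpace.comap (X i) inferInstance) k hk) le_rfl

lemma measurable_pos_memSigma (X : ℕ → Ω → ℝ) (m : ℕ) :
    Measurable[memSigma X (Finset.Icc 1 m)] (pos X m) :=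
  Finset.measurable_sum _ fun k hk => measurable_X_memSigma X hk

lemma ae_pm_one (μ : Measure Ω) [IsProbabilityMeasure μ] {g : Ω → ℝ} (hg : Measurable g)
    {p : ℝ} (hp0 : 0 ≤ p) (hp1 : p ≤ 1)
    (h1 : μ {ω | g ω = 1} = ENNReal.ofReal p)
    (h2 : μ {ω | g ω = -1} = ENNReal.ofReal (1 - p)) :
    ∀ᵐ ω ∂μ, g ω = 1 ∨ g ω = -1 := by
  have hA : MeasurableSet {ω | g ω = 1} := hg (measurableSet_singleton 1)
  have hB : MeasurableSet {ω | g ω = -1} := hg (measurableSet_singleton (-1))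
  have hdisj : Disjoint {ω | g ω = 1} {ω | g ω = -1} := by
    rw [Set.disjoint_left]
    rintro ω h1' h2'
    simp only [Set.mem_setOf_eq] at h1' h2'
    rw [h1'] at h2'; norm_num at h2'
  have hU : μ ({ω | g ω = 1} ∪ {ω | g ω = -1}) = 1 := by
    rw [measure_union hdisj hB, h1, h2, ← ENNReal.ofReal_add hp0 (by linarith)]
    norm_num
  have hcompl : μ ({ω | g ω = 1} ∪ {ω | g ω = -1})ᶜ = 0 := by
    rw [measure_compl (hA.union hB) (measure_ne_top μ _), hU, measure_univ, tsub_self]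
  rw [ae_iff]
  have hset : {a | ¬(g a = 1 ∨ g a = -1)} = ({ω | g ω = 1} ∪ {ω | g ω = -1})ᶜ := by
    ext ω; simp [not_or]
  rw [hset]; exact hcompl

lemma integrable_of_bdd {μ : Measure Ω} [IsProbabilityMeasure μ] {g : Ω → ℝ} {C : ℝ}
    (hg : AEStronglyMeasurable g μ) (h : ∀ᵐ ω ∂μ, |g ω| ≤ C) : Integrable g μ :=
  Integrable.mono' (integrable_const C) hg (by filter_upwards [h] with ω hω; simpa using hω)

lemma erw_key (μ : Measure Ω) [IsProbabilityMeasure μ]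
    {p : ℝ} (hp0 : 0 < p) (hp1 : p < 1)
    {X : ℕ → Ω → ℝ} (hX : ∀ i, Measurable (X i))
    {m j : ℕ} (hm : 1 ≤ m) (hmj : m < j)
    (hstep : erwStep μ p X (Finset.Icc 1 m) j)
    (hpm : ∀ k ∈ Finset.Icc 1 m, ∀ᵐ ω ∂μ, X k ω = 1 ∨ X k ω = -1)
    {f : Ω → ℝ} (hfm : Measurable[memSigma X (Finset.Icc 1 (j-1))] f)
    (hfi : Integrable f μ) :
    ∫ ω, f ω * X j ω ∂μ = (2*p - 1) / m * ∫ ω, f ω * pos X m ω ∂μ := by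
  obtain ⟨K, ε, hK, hε, hKmem, hKunif, hε1, hε2, hKε, hindep, hXj⟩ := hstep
  have hf : Measurable f := hfm.mono (memSigma_le X hX _) le_rfl
  have hεpm : ∀ᵐ ω ∂μ, ε ω = 1 ∨ ε ω = -1 := ae_pm_one μ hε hp0.le (by linarith) hε1 hε2
  have hsub : Finset.Icc 1 m ⊆ Finset.Icc 1 (j-1) := Finset.Icc_subset_Icc le_rfl (by omega)
  have hgi : ∀ k ∈ Finset.Icc 1 m, Integrable (fun ω => f ω * X k ω) μ := by
    intro k hk
    refine Integrable.mono' hfi.norm ((hf.mul (hX k)).aestronglyMeasurable) ?_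
    filter_upwards [hpm k hk] with ω h
    rcases h with h | h <;> simp [h, Real.norm_eq_abs, abs_mul]
  have hBamb : ∀ (k : ℕ) (e : ℝ), MeasurableSet {ω | K ω = k ∧ ε ω = e} := by
    intro k e
    have : {ω | K ω = k ∧ ε ω = e} = K ⁻¹' {k} ∩ ε ⁻¹' {e} := by ext ω; simp
    rw [this]
    exact (hK (measurableSet_singleton k)).inter (hε (measurableSet_singleton e))
  have hblock : ∀ k ∈ Finset.Icc 1 m, ∀ e : ℝ,
      ∫ ω, Set.indicator {ω' | K ω' = k ∧ ε ω' = e} (fun ω' => f ω' * X k ω') ω ∂μ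
        = (μ {ω | K ω = k}).toReal * (μ {ω | ε ω = e}).toReal * ∫ ω, f ω * X k ω ∂μ := by
    intro k hk e
    have hBm1 : MeasurableSet[MeasurableSpace.comap (fun ω => (K ω, ε ω)) inferInstance]
        {ω | K ω = k ∧ ε ω = e} := by
      refine ⟨{k} ×ˢ {e}, (measurableSet_singleton k).prod (measurableSet_singleton e), ?_⟩
      ext ω; simp [Set.mem_prod]
    have hmul : (fun ω => Set.indicator {ω' | K ω' = k ∧ ε ω' = e} (fun ω' => f ω' * X k ω') ω)
        = fun ω => (Set.indicator {ω' | K ω' = k ∧ ε ω' = e} (fun _ => (1:ℝ)) ω) * (f ω * X k ω) := by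
      funext ω; by_cases hω : ω ∈ {ω' | K ω' = k ∧ ε ω' = e} <;> simp [hω]
    have hgm2 : Measurable[memSigma X (Finset.Icc 1 (j-1))] (fun ω => f ω * X k ω) :=
      hfm.mul (measurable_X_memSigma X (hsub hk))
    have h1 : Measurable[MeasurableSpace.comap (fun ω => (K ω, ε ω)) inferInstance]
        (Set.indicator {ω' | K ω' = k ∧ ε ω' = e} (fun _ => (1:ℝ))) :=
      measurable_const.indicator hBm1
    have hind : IndepFun (Set.indicator {ω' | K ω' = k ∧ ε ω' = e} (fun _ => (1:ℝ)))
        (fun ω => f ω * X k ω) μ :=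
      indep_of_indep_of_le_left (indep_of_indep_of_le_right hindep
        (measurable_iff_comap_le.1 hgm2)) (measurable_iff_comap_le.1 h1)
    have hBi : Integrable (Set.indicator {ω' | K ω' = k ∧ ε ω' = e} (fun _ => (1:ℝ))) μ :=
      (integrable_const (1:ℝ)).indicator (hBamb k e)
    rw [hmul]
    have hh : ∫ ω, {ω' | K ω' = k ∧ ε ω' = e}.indicator (fun _ => (1:ℝ)) ω * (f ω * X k ω) ∂μ
        = (∫ ω, {ω' | K ω' = k ∧ ε ω' = e}.indicator (fun _ => (1:ℝ)) ω ∂μ)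
          * ∫ ω, f ω * X k ω ∂μ :=
      hind.integral_mul_eq_mul_integral hBi.aestronglyMeasurable (hgi k hk).aestronglyMeasurable
    rw [hh, integral_indicator_const (1:ℝ) (hBamb k e)]
    have hBμ : μ {ω | K ω = k ∧ ε ω = e} = μ {ω | K ω = k} * μ {ω | ε ω = e} := by
      have h := hKε.measure_inter_preimage_eq_mul (s := {k}) (t := {e})
        (measurableSet_singleton k) (measurableSet_singleton e)
      have hs1 : K ⁻¹' {k} ∩ ε ⁻¹' {e} = {ω | K ω = k ∧ ε ω = e} := by ext ω; simp
      have hs2 : K ⁻¹' {k} = {ω | K ω = k} := rfl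
      have hs3 : ε ⁻¹' {e} = {ω | ε ω = e} := rfl
      rw [hs1, hs2, hs3] at h
      exact h
    rw [measureReal_def, hBμ, ENNReal.toReal_mul, smul_eq_mul, mul_one]
  have hdecomp : ∀ᵐ ω ∂μ, f ω * X j ω = ∑ k ∈ Finset.Icc 1 m,
      (Set.indicator {ω' | K ω' = k ∧ ε ω' = 1} (fun ω' => f ω' * X k ω') ω
       - Set.indicator {ω' | K ω' = k ∧ ε ω' = -1} (fun ω' => f ω' * X k ω') ω) := by
    filter_upwards [hεpm] with ω hω
    rw [Finset.sum_eq_single (K ω)]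
    · rcases hω with h | h <;>
        · simp only [Set.indicator_apply, Set.mem_setOf_eq, h, hXj ω]
          norm_num
    · intro b _ hbne
      have : K ω ≠ b := fun hc => hbne hc.symm
      simp [Set.indicator_apply, this]
    · intro h; exact absurd (hKmem ω) h
  have hsumint : ∀ k ∈ Finset.Icc 1 m, Integrable (fun ω =>
      Set.indicator {ω' | K ω' = k ∧ ε ω' = 1} (fun ω' => f ω' * X k ω') ω
       - Set.indicator {ω' | K ω' = k ∧ ε ω' = -1} (fun ω' => f ω' * X k ω') ω) μ := by
    intro k hk
    exact ((hgi k hk).indicator (hBamb k 1)).sub ((hgi k hk).indicator (hBamb k (-1)))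
  have hcard : (Finset.Icc 1 m).card = m := by rw [Nat.card_Icc]; omega
  have hKval : ∀ k ∈ Finset.Icc 1 m, (μ {ω | K ω = k}).toReal = (m:ℝ)⁻¹ := by
    intro k hk
    rw [hKunif k hk, hcard, ← ENNReal.ofReal_natCast,
      ← ENNReal.ofReal_inv_of_pos (by positivity)]
    · exact ENNReal.toReal_ofReal (by positivity)
  calc ∫ ω, f ω * X j ω ∂μ
      = ∫ ω, ∑ k ∈ Finset.Icc 1 m,
        (Set.indicator {ω' | K ω' = k ∧ ε ω' = 1} (fun ω' => f ω' * X k ω') ω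
         - Set.indicator {ω' | K ω' = k ∧ ε ω' = -1} (fun ω' => f ω' * X k ω') ω) ∂μ :=
        integral_congr_ae hdecomp
    _ = ∑ k ∈ Finset.Icc 1 m,
        (∫ ω, Set.indicator {ω' | K ω' = k ∧ ε ω' = 1} (fun ω' => f ω' * X k ω') ω ∂μ
         - ∫ ω, Set.indicator {ω' | K ω' = k ∧ ε ω' = -1} (fun ω' => f ω' * X k ω') ω ∂μ) := by
        rw [integral_finset_sum _ hsumint]
        exact Finset.sum_congr rfl fun k hk =>
          integral_sub ((hgi k hk).indicator (hBamb k 1)) ((hgi k hk).indicator (hBamb k (-1)))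
    _ = ∑ k ∈ Finset.Icc 1 m, (2*p - 1) / m * ∫ ω, f ω * X k ω ∂μ := by
        refine Finset.sum_congr rfl fun k hk => ?_
        rw [hblock k hk 1, hblock k hk (-1), hKval k hk, hε1, hε2,
          ENNReal.toReal_ofReal hp0.le, ENNReal.toReal_ofReal (by linarith)]
        ring
    _ = (2*p - 1) / m * ∫ ω, f ω * pos X m ω ∂μ := by
        rw [← Finset.mul_sum, ← integral_finset_sum _ hgi]
        congr 1
        refine integral_congr_ae (Eventually.of_forall fun ω => ?_)
        simp [pos, Finset.mul_sum]

lemma erw_step_pm (μ : Measure Ω) [IsProbabilityMeasure μ]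
    {p : ℝ} (hp0 : 0 < p) (hp1 : p < 1)
    {X : ℕ → Ω → ℝ} {mem : Finset ℕ} {j : ℕ}
    (hstep : erwStep μ p X mem j)
    (hmem : ∀ l ∈ mem, ∀ᵐ ω ∂μ, X l ω = 1 ∨ X l ω = -1) :
    ∀ᵐ ω ∂μ, X j ω = 1 ∨ X j ω = -1 := by
  obtain ⟨K, ε, hK, hε, hKmem, -, hε1, hε2, -, -, hXj⟩ := hstep
  have hεpm := ae_pm_one μ hε hp0.le hp1.le hε1 hε2
  have hall : ∀ᵐ ω ∂μ, ∀ l ∈ (↑mem : Set ℕ), X l ω = 1 ∨ X l ω = -1 :=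
    (ae_ball_iff mem.countable_toSet).2 fun l hl => hmem l hl
  filter_upwards [hεpm, hall] with ω h1 h2
  rcases h1 with h | h <;> rcases h2 (K ω) (Finset.mem_coe.2 (hKmem ω)) with h' | h' <;>
    simp [hXj ω, h, h']

/-- ERW with memory frozen at `{1,…,m}` after time `m`: for `n > m`,
`E(S_n² | F_m) = (S_m²/m²)(m² + 2m(2p-1)(n-m) + (2p-1)²(n-m)(n-m-1)) + (n-m)`. -/
theorem stmt_5
    (μ : Measure Ω) [IsProbabilityMeasure μ]
    (p : ℝ) (hp0 : 0 < p) (hp1 : p < 1)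
    (X : ℕ → Ω → ℝ) (hX : ∀ i, Measurable (X i))
    (hinit : erwInit μ p X)
    (m n : ℕ) (hm : 1 ≤ m) (hmn : m < n)
    (hpre : ∀ j, 2 ≤ j → j ≤ m → erwStep μ p X (Finset.Icc 1 (j - 1)) j)
    (hpost : ∀ j, m < j → j ≤ n → erwStep μ p X (Finset.Icc 1 m) j) :
    μ[fun ω => (pos X n ω) ^ 2 | memSigma X (Finset.Icc 1 m)]
      =ᵐ[μ] fun ω =>
        (pos X m ω) ^ 2 / (m : ℝ) ^ 2 *
          ((m : ℝ) ^ 2 + 2 * m * (2 * p - 1) * ((n : ℝ) - m)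
            + (2 * p - 1) ^ 2 * ((n : ℝ) - m) * ((n : ℝ) - m - 1))
        + ((n : ℝ) - m) := by
  have hm0 : (0:ℝ) < m := by exact_mod_cast hm
  have hF : memSigma X (Finset.Icc 1 m) ≤ ‹MeasurableSpace Ω› := memSigma_le X hX _
  -- all steps are ±1 a.e.
  have hpmall : ∀ k, 1 ≤ k → k ≤ n → ∀ᵐ ω ∂μ, X k ω = 1 ∨ X k ω = -1 := by
    intro k
    induction k using Nat.strong_induction_on with
    | _ k ih =>
      intro hk1 hkn
      rcases Nat.lt_or_ge k 2 with h2 | h2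
      · have hk : k = 1 := by omega
        subst hk
        exact ae_pm_one μ (hX 1) hp0.le hp1.le hinit.1 hinit.2
      · by_cases hkm : k ≤ m
        · refine erw_step_pm μ hp0 hp1 (hpre k h2 hkm) ?_
          intro l hl
          have hl' := Finset.mem_Icc.1 hl
          exact ih l (by omega) (by omega) (by omega)
        · refine erw_step_pm μ hp0 hp1 (hpost k (by omega) hkn) ?_
          intro l hl
          have hl' := Finset.mem_Icc.1 hl
          exact ih l (by omega) (by omega) (by omega)
  have hpmIcc : ∀ k ∈ Finset.Icc 1 m, ∀ᵐ ω ∂μ, X k ω = 1 ∨ X k ω = -1 := by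
    intro k hk
    have hk' := Finset.mem_Icc.1 hk
    exact hpmall k hk'.1 (by omega)
  -- boundedness of positions
  have hpos_bd : ∀ r, r ≤ n → ∀ᵐ ω ∂μ, |pos X r ω| ≤ r := by
    intro r hr
    have hall : ∀ᵐ ω ∂μ, ∀ l ∈ (↑(Finset.Icc 1 r) : Set ℕ), X l ω = 1 ∨ X l ω = -1 :=
      (ae_ball_iff (Finset.Icc 1 r).countable_toSet).2 fun l hl => by
        have hl' := Finset.mem_Icc.1 hl
        exact hpmall l hl'.1 (by omega)
    filter_upwards [hall] with ω h
    calc |pos X r ω| ≤ ∑ k ∈ Finset.Icc 1 r, |X k ω| := Finset.abs_sum_le_sum_abs _ _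
      _ ≤ ∑ _k ∈ Finset.Icc 1 r, (1:ℝ) := Finset.sum_le_sum fun k hk => by
          rcases h k (Finset.mem_coe.2 hk) with h' | h' <;> simp [h']
      _ = r := by simp [Nat.card_Icc]
  have hSm_bd : ∀ᵐ ω ∂μ, |pos X m ω| ≤ m := hpos_bd m hmn.le
  have hSm_amb : Measurable (pos X m) := Finset.measurable_sum _ fun k _ => hX k
  have hSn_amb : Measurable (pos X n) := Finset.measurable_sum _ fun k _ => hX k
  have hSm2_int : Integrable (fun ω => (pos X m ω)^2) μ := by
    refine integrable_of_bdd (C := (m:ℝ)^2) ((hSm_amb.pow_const 2).aestronglyMeasurable) ?_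
    filter_upwards [hSm_bd] with ω h
    rw [abs_pow]
    exact pow_le_pow_left₀ (abs_nonneg _) h 2
  have hSn2_int : Integrable (fun ω => (pos X n ω)^2) μ := by
    refine integrable_of_bdd (C := (n:ℝ)^2) ((hSn_amb.pow_const 2).aestronglyMeasurable) ?_
    filter_upwards [hpos_bd n le_rfl] with ω h
    rw [abs_pow]
    exact pow_le_pow_left₀ (abs_nonneg _) h 2
  set s : Finset ℕ := Finset.Ioc m n with hs_def
  set c : ℝ := (2*p - 1) / m with hc_def
  set M : ℝ := (m : ℝ) ^ 2 + 2 * m * (2 * p - 1) * ((n : ℝ) - m)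
      + (2 * p - 1) ^ 2 * ((n : ℝ) - m) * ((n : ℝ) - m - 1) with hM_def
  have hcard_s : s.card = n - m := by rw [hs_def, Nat.card_Ioc]
  -- integrability of products
  have hint_SmXj : ∀ j ∈ s, Integrable (fun ω => pos X m ω * X j ω) μ := by
    intro j hj
    obtain ⟨hj1, hj2⟩ := Finset.mem_Ioc.1 hj
    refine integrable_of_bdd (C := (m:ℝ)) ((hSm_amb.mul (hX j)).aestronglyMeasurable) ?_
    filter_upwards [hSm_bd, hpmall j (by omega) hj2] with ω h1 h2
    rcases h2 with h | h <;> simpa [abs_mul, h] using h1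
  have hint_XX : ∀ j ∈ s, ∀ j' ∈ s, Integrable (fun ω => X j ω * X j' ω) μ := by
    intro j hj j' hj'
    obtain ⟨hj1, hj2⟩ := Finset.mem_Ioc.1 hj
    obtain ⟨hj'1, hj'2⟩ := Finset.mem_Ioc.1 hj'
    refine integrable_of_bdd (C := (1:ℝ)) (((hX j).mul (hX j')).aestronglyMeasurable) ?_
    filter_upwards [hpmall j (by omega) hj2, hpmall j' (by omega) hj'2] with ω h1 h2
    rcases h1 with h | h <;> rcases h2 with h' | h' <;> simp [abs_mul, h, h']
  -- splitting of the walk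
  have hIccIoc : ∀ r : ℕ, Finset.Icc 1 r = Finset.Ioc 0 r := by
    intro r; rw [← Finset.Icc_add_one_left_eq_Ioc, zero_add]
  have hSn_split : ∀ ω, pos X n ω = pos X m ω + ∑ j ∈ s, X j ω := by
    intro ω
    simp only [pos, hIccIoc, hs_def]
    rw [← Finset.sum_Ioc_consecutive _ (Nat.zero_le m) hmn.le]
  have hexp : ∀ ω, (pos X n ω)^2 = (pos X m ω)^2 + 2*(∑ j ∈ s, pos X m ω * X j ω)
      + ∑ j ∈ s, ∑ j' ∈ s, X j ω * X j' ω := by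
    intro ω
    rw [hSn_split ω, ← Finset.mul_sum, ← Finset.sum_mul_sum]
    ring
  -- the key set-integral identity
  have key : ∀ A : Set Ω, MeasurableSet[memSigma X (Finset.Icc 1 m)] A →
      ∫ ω in A, ((pos X m ω) ^ 2 / (m : ℝ) ^ 2 * M + ((n : ℝ) - m)) ∂μ
        = ∫ ω in A, (pos X n ω)^2 ∂μ := by
    intro A hA
    have hA' : MeasurableSet A := hF A hA
    set I : ℝ := ∫ ω in A, (pos X m ω)^2 ∂μ with hI_def
    -- generic helper equalities for indicators
    have hindSm_meas : Measurable[memSigma X (Finset.Icc 1 m)] (A.indicator (pos X m)) :=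
      (measurable_pos_memSigma X m).indicator hA
    have hindSm_int : Integrable (A.indicator (pos X m)) μ := by
      refine integrable_of_bdd (C := (m:ℝ))
        ((hSm_amb.indicator hA').aestronglyMeasurable) ?_
      filter_upwards [hSm_bd] with ω h
      by_cases hω : ω ∈ A
      · simpa [Set.indicator_apply, hω] using h
      · simp [Set.indicator_apply, hω]
    -- claim A : cross terms with S_m
    have claimA : ∀ j ∈ s, ∫ ω in A, pos X m ω * X j ω ∂μ = c * I := by
      intro j hj
      obtain ⟨hj1, hj2⟩ := Finset.mem_Ioc.1 hj
      have hsub : Finset.Icc 1 m ⊆ Finset.Icc 1 (j-1) :=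
        Finset.Icc_subset_Icc le_rfl (by omega)
      have hf_meas : Measurable[memSigma X (Finset.Icc 1 (j-1))] (A.indicator (pos X m)) :=
        hindSm_meas.mono (memSigma_mono X hsub) le_rfl
      have hkey := erw_key μ hp0 hp1 hX hm hj1 (hpost j hj1 hj2) hpmIcc hf_meas hindSm_int
      have hL : ∫ ω, A.indicator (pos X m) ω * X j ω ∂μ
          = ∫ ω in A, pos X m ω * X j ω ∂μ := by
        rw [← integral_indicator hA']
        refine integral_congr_ae (Eventually.of_forall fun ω => ?_)
        by_cases hω : ω ∈ A <;> simp [Set.indicator_apply, hω]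
      have hR : ∫ ω, A.indicator (pos X m) ω * pos X m ω ∂μ = I := by
        rw [hI_def, ← integral_indicator hA']
        refine integral_congr_ae (Eventually.of_forall fun ω => ?_)
        by_cases hω : ω ∈ A <;> simp [Set.indicator_apply, hω, sq]
      rw [← hL, hkey, hR]
    -- claim B : cross terms between two post steps
    have claimB' : ∀ j ∈ s, ∀ j' ∈ s, j < j' →
        ∫ ω in A, X j ω * X j' ω ∂μ = c * (c * I) := by
      intro j hj j' hj' hlt
      obtain ⟨hj1, hj2⟩ := Finset.mem_Ioc.1 hj
      obtain ⟨hj'1, hj'2⟩ := Finset.mem_Ioc.1 hj'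
      have hsub' : Finset.Icc 1 m ⊆ Finset.Icc 1 (j'-1) :=
        Finset.Icc_subset_Icc le_rfl (by omega)
      have hjmem : j ∈ Finset.Icc 1 (j'-1) := Finset.mem_Icc.2 ⟨by omega, by omega⟩
      have hAmem : MeasurableSet[memSigma X (Finset.Icc 1 (j'-1))] A :=
        memSigma_mono X hsub' A hA
      have hf_meas : Measurable[memSigma X (Finset.Icc 1 (j'-1))] (A.indicator (X j)) :=
        (measurable_X_memSigma X hjmem).indicator hAmem
      have hf_int : Integrable (A.indicator (X j)) μ := by
        refine integrable_of_bdd (C := (1:ℝ))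
          (((hX j).indicator hA').aestronglyMeasurable) ?_
        filter_upwards [hpmall j (by omega) hj2] with ω h
        by_cases hω : ω ∈ A
        · rcases h with h | h <;> simp [Set.indicator_apply, hω, h]
        · simp [Set.indicator_apply, hω]
      have hkey := erw_key μ hp0 hp1 hX hm hj'1 (hpost j' hj'1 hj'2) hpmIcc hf_meas hf_int
      have hL : ∫ ω, A.indicator (X j) ω * X j' ω ∂μ
          = ∫ ω in A, X j ω * X j' ω ∂μ := by
        rw [← integral_indicator hA']
        refine integral_congr_ae (Eventually.of_forall fun ω => ?_)
        by_cases hω : ω ∈ A <;> simp [Set.indicator_apply, hω]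
      have hswap : ∫ ω, A.indicator (X j) ω * pos X m ω ∂μ
          = ∫ ω, A.indicator (pos X m) ω * X j ω ∂μ := by
        refine integral_congr_ae (Eventually.of_forall fun ω => ?_)
        by_cases hω : ω ∈ A <;> simp [Set.indicator_apply, hω, mul_comm]
      have hAx : ∫ ω, A.indicator (pos X m) ω * X j ω ∂μ = c * I := by
        have hL2 : ∫ ω, A.indicator (pos X m) ω * X j ω ∂μ
            = ∫ ω in A, pos X m ω * X j ω ∂μ := by
          rw [← integral_indicator hA']
          refine integral_congr_ae (Eventually.of_forall fun ω => ?_)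
          by_cases hω : ω ∈ A <;> simp [Set.indicator_apply, hω]
        rw [hL2]
        exact claimA j hj
      rw [← hL, hkey, hswap, hAx]
    have claimB : ∀ j ∈ s, ∀ j' ∈ s, j ≠ j' →
        ∫ ω in A, X j ω * X j' ω ∂μ = c * (c * I) := by
      intro j hj j' hj' hne
      rcases hne.lt_or_gt with h | h
      · exact claimB' j hj j' hj' h
      · have hcomm : ∫ ω in A, X j ω * X j' ω ∂μ = ∫ ω in A, X j' ω * X j ω ∂μ :=
          integral_congr_ae (Eventually.of_forall fun ω => mul_comm _ _)
        rw [hcomm]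
        exact claimB' j' hj' j hj h
    -- claim C : squares of post steps
    have claimC : ∀ j ∈ s, ∫ ω in A, X j ω * X j ω ∂μ = (μ A).toReal := by
      intro j hj
      obtain ⟨hj1, hj2⟩ := Finset.mem_Ioc.1 hj
      have h1 : ∀ᵐ ω ∂(μ.restrict A), X j ω * X j ω = (1:ℝ) := by
        filter_upwards [ae_restrict_of_ae (hpmall j (by omega) hj2)] with ω h
        rcases h with h | h <;> simp [h]
      rw [integral_congr_ae h1, setIntegral_const, measureReal_def, smul_eq_mul, mul_one]
    -- assemble
    have hinner : ∀ j ∈ s, ∑ j' ∈ s, ∫ ω in A, X j ω * X j' ω ∂μ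
        = (μ A).toReal + (n - m - 1 : ℕ) • (c * (c * I)) := by
      intro j hj
      rw [← Finset.add_sum_erase _ _ hj]
      congr 1
      · exact claimC j hj
      · rw [Finset.sum_congr rfl fun j' hj' =>
          claimB j hj j' (Finset.mem_of_mem_erase hj')
            (fun hc => (Finset.ne_of_mem_erase hj') hc.symm)]
        rw [Finset.sum_const, Finset.card_erase_of_mem hj, hcard_s]
    calc ∫ ω in A, ((pos X m ω) ^ 2 / (m : ℝ) ^ 2 * M + ((n : ℝ) - m)) ∂μ
        = ∫ ω in A, (M / (m:ℝ)^2 * (pos X m ω)^2 + ((n : ℝ) - m)) ∂μ :=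
          integral_congr_ae (Eventually.of_forall fun ω => by ring_nf)
      _ = M / (m:ℝ)^2 * I + ((n : ℝ) - m) * (μ A).toReal := by
          rw [integral_add ((hSm2_int.const_mul _).integrableOn)
            (integrable_const _).integrableOn, integral_const_mul, setIntegral_const, measureReal_def,
            smul_eq_mul, mul_comm ((μ A).toReal)]
      _ = I + 2*((n - m : ℕ) • (c * I))
          + (n - m : ℕ) • ((μ A).toReal + (n - m - 1 : ℕ) • (c * (c * I))) := by
          have hd : ((n - m : ℕ) : ℝ) = (n:ℝ) - m := by
            rw [Nat.cast_sub hmn.le]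
          have hd1 : ((n - m - 1 : ℕ) : ℝ) = (n:ℝ) - m - 1 := by
            rw [Nat.cast_sub (by omega : 1 ≤ n - m), Nat.cast_sub hmn.le, Nat.cast_one]
          have hMc : M / (m:ℝ)^2
              = 1 + 2*((n:ℝ)-m)*c + ((n:ℝ)-m)*((n:ℝ)-m-1)*c^2 := by
            rw [hM_def, hc_def]
            field_simp
          simp only [nsmul_eq_mul, hd, hd1, hMc]
          ring
      _ = ∫ ω in A, (pos X n ω)^2 ∂μ := by
          have e1 : ∫ ω in A, (pos X n ω)^2 ∂μ
              = ∫ ω in A, ((pos X m ω)^2 + 2*(∑ j ∈ s, pos X m ω * X j ω)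
                + ∑ j ∈ s, ∑ j' ∈ s, X j ω * X j' ω) ∂μ :=
            integral_congr_ae (Eventually.of_forall hexp)
          have hint2 : Integrable (fun ω => 2*(∑ j ∈ s, pos X m ω * X j ω)) μ :=
            (integrable_finset_sum s hint_SmXj).const_mul 2
          have hint3 : Integrable (fun ω => ∑ j ∈ s, ∑ j' ∈ s, X j ω * X j' ω) μ :=
            integrable_finset_sum s fun j hj =>
              integrable_finset_sum s fun j' hj' => hint_XX j hj j' hj'
          have hint12 : Integrable (fun ω => pos X m ω ^ 2
              + 2*(∑ j ∈ s, pos X m ω * X j ω)) μ := hSm2_int.add hint2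
          rw [e1, integral_add hint12.integrableOn hint3.integrableOn,
            integral_add hSm2_int.integrableOn hint2.integrableOn]
          have e2 : ∫ ω in A, 2*(∑ j ∈ s, pos X m ω * X j ω) ∂μ
              = 2*((n - m : ℕ) • (c * I)) := by
            rw [integral_const_mul,
              integral_finset_sum s fun j hj => (hint_SmXj j hj).integrableOn,
              Finset.sum_congr rfl claimA, Finset.sum_const, hcard_s]
          have e3 : ∫ ω in A, (∑ j ∈ s, ∑ j' ∈ s, X j ω * X j' ω) ∂μ
              = (n - m : ℕ) • ((μ A).toReal + (n - m - 1 : ℕ) • (c * (c * I))) := by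
            rw [integral_finset_sum s fun j hj =>
              (integrable_finset_sum s fun j' hj' => hint_XX j hj j' hj').integrableOn]
            rw [Finset.sum_congr rfl fun j hj => by
              rw [integral_finset_sum s fun j' hj' => (hint_XX j hj j' hj').integrableOn,
                hinner j hj]]
            rw [Finset.sum_const, hcard_s]
          rw [e2, e3]
      -- done with calc
  -- conclude via uniqueness of conditional expectation
  have hg_int : Integrable (fun ω =>
      (pos X m ω) ^ 2 / (m : ℝ) ^ 2 * M + ((n : ℝ) - m)) μ :=
    ((hSm2_int.div_const _).mul_const M).add (integrable_const _)
  have hg_meas : StronglyMeasurable[memSigma X (Finset.Icc 1 m)] (fun ω =>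
      (pos X m ω) ^ 2 / (m : ℝ) ^ 2 * M + ((n : ℝ) - m)) := by
    apply Measurable.stronglyMeasurable
    exact ((((measurable_pos_memSigma X m).pow_const 2).div_const _).mul_const M).add_const _
  exact (ae_eq_condExp_of_forall_setIntegral_eq hF hSn2_int
    (fun A hA _ => hg_int.integrableOn) (fun A hA _ => key A hA)
    hg_meas.aestronglyMeasurable).symm
end
end

section
/- In the ERW whose memory after time m is {1,...,m}, E(S_n) = n (2p-1) Γ(m+2p-1) / (Γ(m+1) Γ(2p)) * ( (2p-1) + 2(1-p) m/n ) for n > m, using the known formula E(S_m) = (2p-1) Γ(2p+m-1)/(Γ(m) Γ(2p)) for the full-memory ERW. -/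
open MeasureTheory ProbabilityTheory Filter
open scoped ENNReal NNReal Topology

noncomputable section

variable {Ω : Type*} [MeasurableSpace Ω]

lemma sign_ae (μ : Measure Ω) [IsProbabilityMeasure μ] {f : Ω → ℝ} (hf : Measurable f)
    {p : ℝ} (hp0 : 0 < p) (hp1 : p < 1)
    (h1 : μ {ω | f ω = 1} = ENNReal.ofReal p)
    (h2 : μ {ω | f ω = -1} = ENNReal.ofReal (1 - p)) :
    ∀ᵐ ω ∂μ, f ω = 1 ∨ f ω = -1 := by
  have hA : MeasurableSet {ω | f ω = 1} := hf (measurableSet_singleton 1)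
  have hB : MeasurableSet {ω | f ω = -1} := hf (measurableSet_singleton (-1))
  have hdisj : Disjoint {ω | f ω = 1} {ω | f ω = -1} := by
    rw [Set.disjoint_left]; intro ω hω1 hω2
    simp only [Set.mem_setOf_eq] at hω1 hω2; norm_num [hω1] at hω2
  have hU : μ ({ω | f ω = 1} ∪ {ω | f ω = -1}) = 1 := by
    rw [measure_union hdisj hB, h1, h2, ← ENNReal.ofReal_add hp0.le (by linarith)]
    norm_num
  have hcompl : μ ({ω | f ω = 1} ∪ {ω | f ω = -1})ᶜ = 0 := by
    rw [measure_compl (hA.union hB) (measure_ne_top _ _), hU, measure_univ, tsub_self]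
  rw [ae_iff]
  convert hcompl using 2
  ext ω; simp

lemma sign_integral (μ : Measure Ω) [IsProbabilityMeasure μ] {f : Ω → ℝ} (hf : Measurable f)
    {p : ℝ} (hp0 : 0 < p) (hp1 : p < 1)
    (h1 : μ {ω | f ω = 1} = ENNReal.ofReal p)
    (h2 : μ {ω | f ω = -1} = ENNReal.ofReal (1 - p)) :
    ∫ ω, f ω ∂μ = 2 * p - 1 := by
  have hA : MeasurableSet {ω | f ω = 1} := hf (measurableSet_singleton 1)
  have hB : MeasurableSet {ω | f ω = -1} := hf (measurableSet_singleton (-1))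
  have hae := sign_ae μ hf hp0 hp1 h1 h2
  have hcongr : f =ᵐ[μ] fun ω =>
      Set.indicator {ω | f ω = 1} (fun _ => (1:ℝ)) ω
      - Set.indicator {ω | f ω = -1} (fun _ => (1:ℝ)) ω := by
    filter_upwards [hae] with ω h
    rcases h with h | h <;> norm_num [Set.indicator_apply, Set.mem_setOf_eq, h]
  have iA : Integrable ({ω | f ω = 1}.indicator (fun _ => (1:ℝ))) μ :=
    (integrable_indicator_iff hA).2 (integrableOn_const (measure_ne_top _ _))
  have iB : Integrable ({ω | f ω = -1}.indicator (fun _ => (1:ℝ))) μ :=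
    (integrable_indicator_iff hB).2 (integrableOn_const (measure_ne_top _ _))
  rw [integral_congr_ae hcongr, integral_sub iA iB,
    integral_indicator_const _ hA, integral_indicator_const _ hB, measureReal_def, measureReal_def, h1, h2,
    smul_eq_mul, smul_eq_mul, ENNReal.toReal_ofReal hp0.le,
    ENNReal.toReal_ofReal (by linarith)]
  ring


/-- ERW with memory frozen at `{1,…,m}` after time `m`: for `n > m`,
`E(S_n) = n(2p-1)Γ(m+2p-1)/(Γ(m+1)Γ(2p)) · ((2p-1) + 2(1-p)m/n)`, using the known
full-memory formula `E(S_m) = (2p-1)Γ(2p+m-1)/(Γ(m)Γ(2p))`. -/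
theorem stmt_6
    (μ : Measure Ω) [IsProbabilityMeasure μ]
    (p : ℝ) (hp0 : 0 < p) (hp1 : p < 1)
    (X : ℕ → Ω → ℝ) (hX : ∀ i, Measurable (X i))
    (hinit : erwInit μ p X)
    (m n : ℕ) (hm : 1 ≤ m) (hmn : m < n)
    (hpre : ∀ j, 2 ≤ j → j ≤ m → erwStep μ p X (Finset.Icc 1 (j - 1)) j)
    (hpost : ∀ j, m < j → j ≤ n → erwStep μ p X (Finset.Icc 1 m) j)
    (hESm : ∫ ω, pos X m ω ∂μ
      = (2 * p - 1) * Real.Gamma (2 * p + m - 1) / (Real.Gamma m * Real.Gamma (2 * p))) :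
    ∫ ω, pos X n ω ∂μ
      = n * (2 * p - 1) * Real.Gamma ((m : ℝ) + 2 * p - 1)
          / (Real.Gamma ((m : ℝ) + 1) * Real.Gamma (2 * p))
        * ((2 * p - 1) + 2 * (1 - p) * m / n) := by
  -- Step 1: every X j (1 ≤ j ≤ n) is ±1 a.e.
  have hbd : ∀ j, 1 ≤ j → j ≤ n → ∀ᵐ ω ∂μ, X j ω = 1 ∨ X j ω = -1 := by
    intro j
    induction j using Nat.strong_induction_on with
    | _ j ih =>
      intro hj1 hjn
      rcases eq_or_lt_of_le hj1 with h1 | h2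
      · exact h1 ▸ sign_ae μ (hX 1) hp0 hp1 hinit.1 hinit.2
      · -- j ≥ 2
        have hstep : ∃ mem : Finset ℕ, (∀ k ∈ mem, 1 ≤ k ∧ k < j) ∧ erwStep μ p X mem j := by
          rcases le_or_gt j m with hc | hc
          · exact ⟨Finset.Icc 1 (j-1), fun k hk => by
              simp only [Finset.mem_Icc] at hk; omega, hpre j h2 hc⟩
          · exact ⟨Finset.Icc 1 m, fun k hk => by
              simp only [Finset.mem_Icc] at hk; omega, hpost j hc hjn⟩
        obtain ⟨mem, hmemlt, K, ε, hK, hε, hKmem, hKunif, hε1, hε2, hKε, hindep, hXj⟩ := hstep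
        have hεae := sign_ae μ hε hp0 hp1 hε1 hε2
        have hmemae : ∀ᵐ ω ∂μ, ∀ k ∈ mem, X k ω = 1 ∨ X k ω = -1 := by
          rw [eventually_all_finset]
          intro k hk
          obtain ⟨hk1, hk2⟩ := hmemlt k hk
          exact ih k hk2 hk1 (by omega)
        filter_upwards [hεae, hmemae] with ω hεω hXω
        rcases hεω with h | h <;> rcases hXω (K ω) (hKmem ω) with h' | h' <;>
          simp [hXj ω, h, h']
  -- Step 2: integrability
  have hint : ∀ j, 1 ≤ j → j ≤ n → Integrable (X j) μ := by
    intro j h1 h2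
    refine (integrable_const (1:ℝ)).mono' (hX j).aestronglyMeasurable ?_
    filter_upwards [hbd j h1 h2] with ω h
    rcases h with h | h <;> simp [h]
  -- Step 3: expectation of a post step
  have hEX : ∀ j, m < j → j ≤ n → ∫ ω, X j ω ∂μ = (2*p-1)/m * ∫ ω, pos X m ω ∂μ := by
    intro j hj1 hj2
    obtain ⟨K, ε, hK, hε, hKmem, hKunif, hε1, hε2, hKε, hindep, hXj⟩ := hpost j hj1 hj2
    have hcard : (Finset.Icc 1 m).card = m := by rw [Nat.card_Icc]; omega
    have hεae := sign_ae μ hε hp0 hp1 hε1 hε2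
    have hrep : ∀ ω, X j ω = ∑ k ∈ Finset.Icc 1 m, (if K ω = k then ε ω else 0) * X k ω := by
      intro ω
      simp only [ite_mul, zero_mul]
      rw [Finset.sum_ite_eq, if_pos (hKmem ω), hXj ω]
    -- integrability of each summand
    have hgkmeas : ∀ k : ℕ, Measurable (fun ω => (if K ω = k then ε ω else 0)) := by
      intro k
      exact Measurable.ite (hK (measurableSet_singleton k)) hε measurable_const
    have hintk : ∀ k ∈ Finset.Icc 1 m, Integrable
        (fun ω => (if K ω = k then ε ω else 0) * X k ω) μ := by
      intro k hk
      simp only [Finset.mem_Icc] at hk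
      refine (integrable_const (1:ℝ)).mono'
        ((hgkmeas k).mul (hX k)).aestronglyMeasurable ?_
      filter_upwards [hεae, hbd k hk.1 (by omega)] with ω h h'
      have hb1 : |(if K ω = k then ε ω else 0)| ≤ 1 := by
        rcases h with h | h <;> split <;> simp [h]
      have hb2 : |X k ω| ≤ 1 := by rcases h' with h' | h' <;> simp [h']
      calc ‖(if K ω = k then ε ω else 0) * X k ω‖
          = |(if K ω = k then ε ω else 0)| * |X k ω| := abs_mul _ _
        _ ≤ 1 * 1 := mul_le_mul hb1 hb2 (abs_nonneg _) zero_le_one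
        _ = (1:ℝ) := one_mul 1
    have key : ∀ k ∈ Finset.Icc 1 m,
        ∫ ω, (if K ω = k then ε ω else 0) * X k ω ∂μ
          = (2*p-1)/m * ∫ ω, X k ω ∂μ := by
      intro k hk
      simp only [Finset.mem_Icc] at hk
      -- independence of the pair from X k
      have hle : MeasurableSpace.comap (X k) inferInstance
          ≤ memSigma X (Finset.Icc 1 (j-1)) := by
        have hk' : k ∈ Finset.Icc 1 (j-1) := by simp only [Finset.mem_Icc]; omega
        exact le_iSup₂ (f := fun i (_ : i ∈ Finset.Icc 1 (j-1)) =>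
          MeasurableSpace.comap (X i) inferInstance) k hk'
      have hpairind : IndepFun (fun ω => (K ω, ε ω)) (X k) μ := by
        rw [IndepFun_iff_Indep]
        exact indep_of_indep_of_le_right hindep hle
      have hφ : Measurable (fun q : ℕ × ℝ => if q.1 = k then q.2 else 0) :=
        Measurable.ite (measurable_fst (measurableSet_singleton k)) measurable_snd
          measurable_const
      have hgind : IndepFun (fun ω => (if K ω = k then ε ω else 0)) (X k) μ :=
        hpairind.comp hφ measurable_id
      have hintg : Integrable (fun ω => (if K ω = k then ε ω else 0)) μ := by
        refine (integrable_const (1:ℝ)).mono' (hgkmeas k).aestronglyMeasurable ?_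
        filter_upwards [hεae] with ω h
        rcases h with h | h <;> split <;> simp [h]
      have hmul : ∫ ω, (if K ω = k then ε ω else 0) * X k ω ∂μ
          = (∫ ω, (if K ω = k then ε ω else 0) ∂μ) * ∫ ω, X k ω ∂μ :=
        hgind.integral_mul_eq_mul_integral hintg.aestronglyMeasurable
          (hint k hk.1 (by omega)).aestronglyMeasurable
      -- value of ∫ g
      have hψm : Measurable (fun i : ℕ => if i = k then (1:ℝ) else 0) :=
        measurable_from_top
      have hψind : IndepFun (fun ω => (if K ω = k then (1:ℝ) else 0)) ε μ :=
        hKε.comp hψm measurable_id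
      have hgeq : (fun ω => (if K ω = k then ε ω else 0))
          = fun ω => (if K ω = k then (1:ℝ) else 0) * ε ω := by
        ext ω; split <;> simp
      have hintψ : Integrable (fun ω => (if K ω = k then (1:ℝ) else 0)) μ := by
        refine (integrable_const (1:ℝ)).mono'
          (Measurable.ite (hK (measurableSet_singleton k)) measurable_const
            measurable_const).aestronglyMeasurable ?_
        filter_upwards with ω; split <;> simp
      have hintε : Integrable ε μ := by
        refine (integrable_const (1:ℝ)).mono' hε.aestronglyMeasurable ?_
        filter_upwards [hεae] with ω h; rcases h with h | h <;> simp [h]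
      have hsetm : MeasurableSet {ω | K ω = k} := hK (measurableSet_singleton k)
      have hψval : ∫ ω, (if K ω = k then (1:ℝ) else 0) ∂μ = (m:ℝ)⁻¹ := by
        have heq : (fun ω => if K ω = k then (1:ℝ) else 0)
            = Set.indicator {ω | K ω = k} (fun _ => (1:ℝ)) := by
          ext ω; simp [Set.indicator_apply, Set.mem_setOf_eq]
        rw [heq, integral_indicator_const _ hsetm, measureReal_def,
          hKunif k (by simp only [Finset.mem_Icc]; omega), hcard, smul_eq_mul, mul_one]
        simp [ENNReal.toReal_inv]
      have hεval : ∫ ω, ε ω ∂μ = 2*p - 1 := sign_integral μ hε hp0 hp1 hε1 hε2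
      have h' : ∫ ω, (if K ω = k then (1:ℝ) else 0) * ε ω ∂μ
          = (∫ ω, (if K ω = k then (1:ℝ) else 0) ∂μ) * ∫ ω, ε ω ∂μ :=
        hψind.integral_mul_eq_mul_integral hintψ.aestronglyMeasurable hintε.aestronglyMeasurable
      have hgval : ∫ ω, (if K ω = k then ε ω else 0) ∂μ = (m:ℝ)⁻¹ * (2*p-1) := by
        rw [hgeq, h', hψval, hεval]
      rw [hmul, hgval]
      ring
    rw [integral_congr_ae (Eventually.of_forall hrep),
      integral_finset_sum _ hintk, Finset.sum_congr rfl key, ← Finset.mul_sum]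
    congr 1
    exact (integral_finset_sum _ (fun k hk => by
      simp only [Finset.mem_Icc] at hk
      exact hint k hk.1 (by omega))).symm
  -- Step 4: split the sum
  have hsplit : ∫ ω, pos X n ω ∂μ
      = (∫ ω, pos X m ω ∂μ) + ∑ j ∈ Finset.Ioc m n, ∫ ω, X j ω ∂μ := by
    have hrepn : ∀ ω, pos X n ω = pos X m ω + ∑ j ∈ Finset.Ioc m n, X j ω := by
      intro ω
      simp only [pos, ← Finset.Icc_add_one_left_eq_Ioc 0]
      exact (Finset.sum_Ioc_consecutive _ (Nat.zero_le m) hmn.le).symm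
    have hintIoc : ∀ j ∈ Finset.Ioc m n, Integrable (X j) μ := by
      intro j hj
      simp only [Finset.mem_Ioc] at hj
      exact hint j (by omega) hj.2
    have hintm : Integrable (pos X m) μ := by
      apply integrable_finset_sum
      intro k hk
      simp only [Finset.mem_Icc] at hk
      exact hint k hk.1 (by omega)
    rw [integral_congr_ae (Eventually.of_forall hrepn),
      integral_add hintm (integrable_finset_sum _ hintIoc),
      integral_finset_sum _ hintIoc]
  -- Step 5: put together
  have hsum : ∑ j ∈ Finset.Ioc m n, ∫ ω, X j ω ∂μ
      = ((n:ℝ) - m) * ((2*p-1)/m * ∫ ω, pos X m ω ∂μ) := by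
    rw [Finset.sum_congr rfl (fun j hj => by
      simp only [Finset.mem_Ioc] at hj
      exact hEX j hj.1 hj.2), Finset.sum_const, Nat.card_Ioc, nsmul_eq_mul,
      Nat.cast_sub hmn.le]
  rw [hsplit, hsum, hESm]
  have hm0 : (m:ℝ) ≠ 0 := Nat.cast_ne_zero.2 (by omega)
  have hn0 : (n:ℝ) ≠ 0 := Nat.cast_ne_zero.2 (by omega)
  have hΓm : Real.Gamma m ≠ 0 := (Real.Gamma_pos_of_pos (by positivity)).ne'
  have hΓ2p : Real.Gamma (2*p) ≠ 0 := (Real.Gamma_pos_of_pos (by linarith)).ne'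
  have harg : (m:ℝ) + 2*p - 1 = 2*p + m - 1 := by ring
  have hΓm1 : Real.Gamma ((m:ℝ)+1) = m * Real.Gamma m := Real.Gamma_add_one hm0
  rw [harg, hΓm1]
  field_simp
  ring
end
end
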